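/- Let c be non-recurrent for T_s (s ∈ (√2,2]) and let δ > 0 be less than inf_i |c − cᵢ|. Then for every i ≥ 1 and every interval J ⊇ (cᵢ − δ, cᵢ + δ), and every n ≥ 0, the map T_sⁿ restricted to J is not ε-symmetric with centre cᵢ, where ε = ε(δ) is the constant from the non-symmetry proposition. -/

import Mathlib

/-!
Since the orbit of `cᵢ` stays `δ`-away from the turning point `1/2`, `T_sⁿ` is affine with
slope `±sⁿ` on the interval of radius `r = δ / sⁿ` around `cᵢ`. An orientation-reversing
homeomorphism of `J` fixing `cᵢ` must pair some point of `[cᵢ - r, cᵢ]` with a point of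
`[cᵢ, cᵢ + r]` at distance at least `r`, and on that pair `T_sⁿ` differs by at least
`sⁿ r = δ`. So `ε = δ` works.
-/

noncomputable def tent (s : ℝ) : ℝ → ℝ := fun x => min (s * x) (s * (1 - x))

def EpsSymmetric (f : ℝ → ℝ) (a b m ε : ℝ) : Prop :=
  ∃ i : ℝ → ℝ, ContinuousOn i (Set.Icc a b) ∧
    Set.BijOn i (Set.Icc a b) (Set.Icc a b) ∧
    i a = b ∧ i b = a ∧ i m = m ∧
    ∀ x ∈ Set.Icc a b, |f x - f (i x)| < ε

open Set

lemma tent_of_le_half {s x : ℝ} (hs : 0 ≤ s) (hx : x ≤ 1/2) : tent s x = s * x :=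
  min_eq_left (by nlinarith)

lemma tent_of_half_le {s x : ℝ} (hs : 0 ≤ s) (hx : 1/2 ≤ x) : tent s x = s * (1 - x) :=
  min_eq_right (by nlinarith)

lemma exists_tent_eq_add_mul_near {s : ℝ} (hs : 0 ≤ s) (y : ℝ) :
    ∃ k, |k| = s ∧ ∀ x, |x - y| < |1/2 - y| → tent s x = tent s y + k * (x - y) := by
  rcases le_or_gt y (1/2) with hy | hy
  · refine ⟨s, abs_of_nonneg hs, fun x hx => ?_⟩
    rw [abs_of_nonneg (by linarith : 0 ≤ 1/2 - y)] at hx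
    rw [tent_of_le_half hs hy, tent_of_le_half hs (by linarith [le_abs_self (x - y)])]
    ring
  · refine ⟨-s, by rw [abs_neg, abs_of_nonneg hs], fun x hx => ?_⟩
    rw [abs_of_neg (by linarith : 1/2 - y < 0)] at hx
    rw [tent_of_half_le hs hy.le, tent_of_half_le hs (by linarith [neg_abs_le (x - y)])]
    ring

lemma exists_tent_iterate_eq_add_mul_near {s δ m : ℝ} (hs : 1 ≤ s) (n : ℕ)
    (hm : ∀ j < n, δ < |1/2 - (tent s)^[j] m|) :
    ∃ k, |k| = s ^ n ∧ ∀ x, s ^ n * |x - m| ≤ δ →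
      (tent s)^[n] x = (tent s)^[n] m + k * (x - m) := by
  induction n with
  | zero => exact ⟨1, by simp, fun x _ => by simp⟩
  | succ n ih =>
    obtain ⟨k, hk, hfk⟩ := ih fun j hj => hm j (by omega)
    obtain ⟨k', hk', hk'f⟩ := exists_tent_eq_add_mul_near (by linarith : (0:ℝ) ≤ s)
      ((tent s)^[n] m)
    refine ⟨k' * k, by rw [abs_mul, hk, hk', pow_succ'], fun x hx => ?_⟩
    have hxn : s ^ n * |x - m| ≤ δ := by
      have : s ^ n * |x - m| ≤ s ^ (n + 1) * |x - m| :=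
        mul_le_mul_of_nonneg_right (pow_le_pow_right₀ hs n.le_succ) (abs_nonneg _)
      linarith
    have hnear : |(tent s)^[n] x - (tent s)^[n] m| < |1/2 - (tent s)^[n] m| := by
      rw [hfk x hxn, add_sub_cancel_left, abs_mul, hk]
      exact hxn.trans_lt (hm n n.lt_succ_self)
    rw [Function.iterate_succ_apply', Function.iterate_succ_apply', hk'f _ hnear, hfk x hxn]
    ring

lemma exists_mem_Icc_le_sub_of_fixed {ι : ℝ → ℝ} {a b m r : ℝ}
    (hcont : ContinuousOn ι (Icc a b)) (hinj : InjOn ι (Icc a b))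
    (ha : ι a = b) (hb : ι b = a) (hm : ι m = m)
    (hr : 0 ≤ r) (har : a ≤ m - r) (hrb : m + r ≤ b) :
    ∃ x ∈ Icc (m - r) m, ι x ∈ Icc m (m + r) ∧ r ≤ ι x - x := by
  have hanti : StrictAntiOn ι (Icc a b) :=
    hcont.strictAntiOn_of_injOn_Icc (by linarith) (by rw [ha, hb]; linarith) hinj
  have hsub : Icc (m - r) m ⊆ Icc a b := Icc_subset_Icc har (by linarith)
  have hm_le : ∀ x ∈ Icc (m - r) m, m ≤ ι x := fun x hx =>
    hm ▸ hanti.antitoneOn (hsub hx) (hsub ⟨by linarith, le_rfl⟩) hx.2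
  have hcont' : ContinuousOn (fun x => max (m - x) (ι x - m)) (Icc (m - r) m) := by
    have := hcont.mono hsub
    fun_prop
  -- The displacement `max (m - x) (ι x - m)` runs from `≥ r` at `m - r` down to `0` at `m`.
  obtain ⟨x, hx, hdx⟩ : r ∈ (fun x => max (m - x) (ι x - m)) '' Icc (m - r) m :=
    intermediate_value_Icc' (by linarith) hcont'
      ⟨by simp [hm, hr], le_max_of_le_left (by linarith)⟩
  have h₁ := hm_le x hx
  simp only [max_eq_iff] at hdx
  refine ⟨x, hx, ⟨h₁, ?_⟩, ?_⟩ <;> rcases hdx with ⟨hd, hle⟩ | ⟨hd, hle⟩ <;>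
    linarith [hx.1, hx.2]

lemma EpsSymmetric.abs_mul_lt {f : ℝ → ℝ} {a b m ε k r : ℝ}
    (hsym : EpsSymmetric f a b m ε) (hr : 0 ≤ r) (har : a ≤ m - r) (hrb : m + r ≤ b)
    (hf : ∀ x, |x - m| ≤ r → f x = f m + k * (x - m)) :
    |k| * r < ε := by
  obtain ⟨ι, hcont, hbij, ha, hb, hm, hε⟩ := hsym
  obtain ⟨x, hx, hιx, hfar⟩ :=
    exists_mem_Icc_le_sub_of_fixed hcont hbij.injOn ha hb hm hr har hrb
  have hx_near : |x - m| ≤ r := abs_le.2 ⟨by linarith [hx.1], by linarith [hx.2]⟩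
  have hιx_near : |ι x - m| ≤ r := abs_le.2 ⟨by linarith [hιx.1], by linarith [hιx.2]⟩
  calc |k| * r ≤ |k| * (ι x - x) := mul_le_mul_of_nonneg_left hfar (abs_nonneg k)
    _ = |f x - f (ι x)| := by
      rw [hf x hx_near, hf (ι x) hιx_near, abs_sub_comm, show
        f m + k * (ι x - m) - (f m + k * (x - m)) = k * (ι x - x) by ring,
        abs_mul, abs_of_nonneg (show 0 ≤ ι x - x by linarith)]
    _ < ε := hε x ⟨by linarith [hx.1], by linarith [hx.2]⟩

theorem no_eps_symmetry_at_critical_orbit_general (s : ℝ)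
    (hs : s ∈ Set.Ioc (Real.sqrt 2) 2)
    (δ : ℝ) (hδ : 0 < δ)
    (hδsmall : ∀ i : ℕ, 1 ≤ i → δ < |1/2 - (tent s)^[i] (1/2)|) :
    ∃ ε > 0, ∀ i : ℕ, 1 ≤ i → ∀ a b : ℝ,
      Set.Ioo ((tent s)^[i] (1/2) - δ) ((tent s)^[i] (1/2) + δ) ⊆ Set.Icc a b →
      ∀ n : ℕ, ¬ EpsSymmetric ((tent s)^[n]) a b ((tent s)^[i] (1/2)) ε := by
  have hs1 : 1 ≤ s := Real.one_lt_sqrt_two.le.trans hs.1.le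
  refine ⟨δ, hδ, fun i hi a b hJ n hsym => ?_⟩
  set m := (tent s)^[i] (1/2)
  have hab : a ≤ m - δ ∧ m + δ ≤ b := by
    have := closure_minimal hJ isClosed_Icc
    rwa [closure_Ioo (by linarith), Icc_subset_Icc_iff (by linarith)] at this
  have horbit : ∀ j < n, δ < |1/2 - (tent s)^[j] m| := fun j _ => by
    simpa only [m, ← Function.iterate_add_apply] using hδsmall (j + i) (by omega)
  obtain ⟨k, hk, hf⟩ := exists_tent_iterate_eq_add_mul_near hs1 n horbit
  have hsn : 0 < s ^ n := pow_pos (by linarith) n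
  have hr : δ / s ^ n ≤ δ := div_le_self hδ.le (one_le_pow₀ hs1)
  have := hsym.abs_mul_lt (div_nonneg hδ.le hsn.le) (by linarith) (by linarith)
    fun x hx => hf x (by rwa [← le_div_iff₀' hsn])
  rw [hk, mul_div_cancel₀ _ hsn.ne'] at this
  exact this.false

/-- (Corollary 3.16) Let `c = 1/2` be non-recurrent for `T_s`, `s ∈ (√2,2]`,
and let `δ > 0` be less than `inf_i |c - cᵢ|`. Then there is `ε > 0` such
that for every `i ≥ 1`, every interval `J = [a,b] ⊇ (cᵢ - δ, cᵢ + δ)` and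
every `n ≥ 0`, the map `T_s^n|_J` is not `ε`-symmetric with centre `cᵢ`. -/
theorem no_eps_symmetry_at_critical_orbit (s : ℝ)
    (hs : s ∈ Set.Ioc (Real.sqrt 2) 2)
    (hnr : ∃ ε₀ > 0, ∀ n : ℕ, 1 ≤ n → ε₀ ≤ |1/2 - (tent s)^[n] (1/2)|)
    (δ : ℝ) (hδ : 0 < δ)
    (hδsmall : ∀ i : ℕ, 1 ≤ i → δ < |1/2 - (tent s)^[i] (1/2)|) :
    ∃ ε > 0, ∀ i : ℕ, 1 ≤ i → ∀ a b : ℝ,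
      Set.Ioo ((tent s)^[i] (1/2) - δ) ((tent s)^[i] (1/2) + δ) ⊆ Set.Icc a b →
      ∀ n : ℕ, ¬ EpsSymmetric ((tent s)^[n]) a b ((tent s)^[i] (1/2)) ε :=
  no_eps_symmetry_at_critical_orbit_general s hs δ hδ hδsmall
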